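/- For every r ∈ (0,1), in the Loewner order on bounded self-adjoint operators on H₀ × H₀: Σ_D ≤ k₁(r)·Σ_R(r) and Σ_R(r) ≤ k₂(r)·Σ_D, where k₁(r) = 1−r+r² + √(r²(1−r)² + (1−2r)²) and k₂(r) = (1−r+r² + √(r²(1−r)² + (1−2r)²))/(2r(1−r)). -/
import Mathlib


open scoped RealInnerProductSpace

/-- Quadratic form of the block operator `[[d•I + a•T², b•T], [b•T, c•I]]` on `H₀ × H₀`
(with the product inner product), evaluated at the vector `(f, g)`. -/
noncomputable def blockQuadForm {H₀ : Type*} [NormedAddCommGroup H₀] [InnerProductSpace ℝ H₀]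
    (T : H₀ →L[ℝ] H₀) (a b c d : ℝ) (f g : H₀) : ℝ :=
  ⟪f, d • f + a • T (T f) + b • T g⟫ + ⟪g, b • T f + c • g⟫

/-- Quadratic form of `Σ_D = [[2I + 4T², 2T], [2T, 2I]]`. -/
noncomputable def sigmaD {H₀ : Type*} [NormedAddCommGroup H₀] [InnerProductSpace ℝ H₀]
    (T : H₀ →L[ℝ] H₀) (f g : H₀) : ℝ :=
  blockQuadForm T 4 2 2 2 f g

/-- Quadratic form of
`Σ_R(r) = [[((2−r)/r)I + (2/(r(1−r)))T², (2/(1−r))T], [(2/(1−r))T, ((1+r)/(1−r))I]]`. -/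
noncomputable def sigmaR {H₀ : Type*} [NormedAddCommGroup H₀] [InnerProductSpace ℝ H₀]
    (T : H₀ →L[ℝ] H₀) (r : ℝ) (f g : H₀) : ℝ :=
  blockQuadForm T (2 / (r * (1 - r))) (2 / (1 - r)) ((1 + r) / (1 - r)) ((2 - r) / r) f g

noncomputable def kOne (r : ℝ) : ℝ :=
  1 - r + r ^ 2 + Real.sqrt (r ^ 2 * (1 - r) ^ 2 + (1 - 2 * r) ^ 2)

noncomputable def kTwo (r : ℝ) : ℝ :=
  (1 - r + r ^ 2 + Real.sqrt (r ^ 2 * (1 - r) ^ 2 + (1 - 2 * r) ^ 2)) / (2 * r * (1 - r))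

private lemma quadRealAux (A B C s t y : ℝ) (hA : 0 ≤ A) (hC : 0 ≤ C)
    (hD : B ^ 2 ≤ 4 * A * C) (ht : |t| ≤ s * y) :
    0 ≤ A * s ^ 2 + B * t + C * y ^ 2 := by
  rcases abs_le.mp ht with ⟨h1, h2⟩
  rcases eq_or_lt_of_le hA with hA0 | hA0
  · have hB : B = 0 := by nlinarith [sq_nonneg B]
    rw [← hA0, hB]
    nlinarith [mul_nonneg hC (sq_nonneg y)]
  rcases le_or_gt 0 B with hB | hB
  · have key : 0 ≤ 4 * A * (A * s ^ 2 + B * t + C * y ^ 2) := by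
      have e : 4 * A * (A * s ^ 2 + B * t + C * y ^ 2)
          = (2*A*s - B*y)^2 + (4*A*C - B^2)*y^2 + 4*A*B*(t + s*y) := by ring
      rw [e]
      have h3 : 0 ≤ 4*A*B*(t + s*y) :=
        mul_nonneg (by positivity) (by linarith)
      nlinarith [sq_nonneg (2*A*s - B*y),
        mul_nonneg (by linarith : (0:ℝ) ≤ 4*A*C - B^2) (sq_nonneg y)]
    nlinarith [key]
  · have key : 0 ≤ 4 * A * (A * s ^ 2 + B * t + C * y ^ 2) := by
      have e : 4 * A * (A * s ^ 2 + B * t + C * y ^ 2)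
          = (2*A*s + B*y)^2 + (4*A*C - B^2)*y^2 + 4*A*B*(t - s*y) := by ring
      rw [e]
      have h3 : 0 ≤ 4*A*B*(t - s*y) := by
        have := mul_nonneg hA (mul_nonneg (neg_nonneg.2 hB.le)
          (by linarith : (0:ℝ) ≤ s*y - t))
        nlinarith [this]
      nlinarith [sq_nonneg (2*A*s + B*y),
        mul_nonneg (by linarith : (0:ℝ) ≤ 4*A*C - B^2) (sq_nonneg y)]
    nlinarith [key]

private lemma blockQuadForm_eq {H₀ : Type*} [NormedAddCommGroup H₀] [InnerProductSpace ℝ H₀]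
    [CompleteSpace H₀] (T : H₀ →L[ℝ] H₀) (hT : IsSelfAdjoint T) (a b c d : ℝ) (f g : H₀) :
    blockQuadForm T a b c d f g
      = d * ‖f‖ ^ 2 + a * ‖T f‖ ^ 2 + 2 * b * ⟪T f, g⟫ + c * ‖g‖ ^ 2 := by
  have hsym := ContinuousLinearMap.isSelfAdjoint_iff_isSymmetric.mp hT
  have h1 : (⟪f, T (T f)⟫ : ℝ) = ‖T f‖ ^ 2 := by
    have := hsym f (T f)
    simp only [ContinuousLinearMap.coe_coe] at this
    rw [← this, real_inner_self_eq_norm_sq]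
  have h2 : (⟪f, T g⟫ : ℝ) = ⟪T f, g⟫ := by
    have := hsym f g
    simp only [ContinuousLinearMap.coe_coe] at this
    exact this.symm
  have h3 : (⟪g, T f⟫ : ℝ) = ⟪T f, g⟫ := real_inner_comm _ _
  simp only [blockQuadForm, inner_add_right, real_inner_smul_right, h1, h2, h3,
    real_inner_self_eq_norm_sq]
  ring

set_option maxHeartbeats 1000000 in
theorem stmt7 {H₀ : Type*} [NormedAddCommGroup H₀] [InnerProductSpace ℝ H₀] [CompleteSpace H₀]
    (T : H₀ →L[ℝ] H₀) (hT : IsSelfAdjoint T)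
    (r : ℝ) (hr : r ∈ Set.Ioo (0 : ℝ) 1) :
    (∀ f g : H₀, sigmaD T f g ≤ kOne r * sigmaR T r f g) ∧
    (∀ f g : H₀, sigmaR T r f g ≤ kTwo r * sigmaD T f g) := by
  obtain ⟨hr0, hr1⟩ := hr
  have h1r : (0:ℝ) < 1 - r := by linarith
  have hp : (0:ℝ) < r * (1 - r) := mul_pos hr0 h1r
  set q : ℝ := Real.sqrt (r ^ 2 * (1 - r) ^ 2 + (1 - 2 * r) ^ 2) with hqdef
  have hq0 : 0 ≤ q := Real.sqrt_nonneg _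
  have hq2 : q ^ 2 = r ^ 2 * (1 - r) ^ 2 + (1 - 2 * r) ^ 2 :=
    Real.sq_sqrt (by positivity)
  have habs : |1 - 2 * r| ≤ q := by
    rw [hqdef, ← Real.sqrt_sq_eq_abs]
    exact Real.sqrt_le_sqrt (by nlinarith [sq_nonneg (r * (1 - r))])
  have hq1 : 1 - 2 * r ≤ q := le_trans (le_abs_self _) habs
  have hq1' : 2 * r - 1 ≤ q := by
    have := neg_abs_le (1 - 2 * r); linarith
  have hkone : kOne r = 1 - r + r ^ 2 + q := by rw [kOne]
  have hktwo : kTwo r = (1 - r + r ^ 2 + q) / (2 * r * (1 - r)) := by rw [kTwo]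
  set k : ℝ := 1 - r + r ^ 2 + q with hk
  -- scalar coefficient facts
  have hD1x : 0 ≤ (1 - r) * (k * (2 - r) - 2 * r) := by nlinarith
  have hA1 : 0 ≤ 2 * k - 4 * (r * (1 - r)) := by nlinarith [sq_nonneg (2*r - 1)]
  have hC1 : 0 ≤ k * r * (1 + r) - 2 * (r * (1 - r)) := by nlinarith
  have hB1 : (4 * k * r - 4 * (r * (1 - r))) ^ 2
      = 4 * (2 * k - 4 * (r * (1 - r))) * (k * r * (1 + r) - 2 * (r * (1 - r))) := by
    rw [hk]; linear_combination (-8 * r * (1 - r)) * hq2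
  have hD2x : 0 ≤ k - (1 - r) * (2 - r) := by nlinarith
  have hA2 : 0 ≤ 2 * k - 2 := by
    nlinarith [sq_nonneg (1 - 2*r), sq_nonneg (q - r*(1-r)),
      mul_nonneg hq0 (mul_nonneg hr0.le h1r.le)]
  have hC2 : 0 ≤ k - r * (1 + r) := by nlinarith
  have hB2 : (2 * k - 4 * r) ^ 2 = 4 * (2 * k - 2) * (k - r * (1 + r)) := by
    rw [hk]; linear_combination (-4 : ℝ) * hq2
  clear_value k
  clear_value q
  constructor
  · intro f g
    have ht : |(⟪T f, g⟫ : ℝ)| ≤ ‖T f‖ * ‖g‖ := abs_real_inner_le_norm _ _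
    have key : 0 ≤ (1 - r) * (k * (2 - r) - 2 * r) * ‖f‖ ^ 2
        + ((2 * k - 4 * (r * (1 - r))) * ‖T f‖ ^ 2
          + (4 * k * r - 4 * (r * (1 - r))) * ⟪T f, g⟫
          + (k * r * (1 + r) - 2 * (r * (1 - r))) * ‖g‖ ^ 2) :=
      add_nonneg (mul_nonneg hD1x (sq_nonneg _))
        (quadRealAux _ _ _ _ _ _ hA1 hC1 hB1.le ht)
    rw [sigmaD, sigmaR, blockQuadForm_eq T hT, blockQuadForm_eq T hT, hkone]
    have hfin : (1 - r) * (k * (2 - r) - 2 * r) * ‖f‖ ^ 2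
          + ((2 * k - 4 * (r * (1 - r))) * ‖T f‖ ^ 2
            + (4 * k * r - 4 * (r * (1 - r))) * ⟪T f, g⟫
            + (k * r * (1 + r) - 2 * (r * (1 - r))) * ‖g‖ ^ 2)
        = (k * ((2 - r) / r * ‖f‖ ^ 2 + 2 / (r * (1 - r)) * ‖T f‖ ^ 2
          + 2 * (2 / (1 - r)) * ⟪T f, g⟫ + (1 + r) / (1 - r) * ‖g‖ ^ 2)
        - (2 * ‖f‖ ^ 2 + 4 * ‖T f‖ ^ 2 + 2 * 2 * ⟪T f, g⟫ + 2 * ‖g‖ ^ 2))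
          * (r * (1 - r)) := by
      field_simp
      ring
    rw [hfin] at key
    have hfin2 := (mul_nonneg_iff_of_pos_right hp).mp key
    linarith
  · intro f g
    have ht : |(⟪T f, g⟫ : ℝ)| ≤ ‖T f‖ * ‖g‖ := abs_real_inner_le_norm _ _
    have key : 0 ≤ (k - (1 - r) * (2 - r)) * ‖f‖ ^ 2
        + ((2 * k - 2) * ‖T f‖ ^ 2 + (2 * k - 4 * r) * ⟪T f, g⟫
          + (k - r * (1 + r)) * ‖g‖ ^ 2) :=
      add_nonneg (mul_nonneg hD2x (sq_nonneg _))
        (quadRealAux _ _ _ _ _ _ hA2 hC2 hB2.le ht)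
    rw [sigmaD, sigmaR, blockQuadForm_eq T hT, blockQuadForm_eq T hT, hktwo]
    have hfin : (k - (1 - r) * (2 - r)) * ‖f‖ ^ 2
          + ((2 * k - 2) * ‖T f‖ ^ 2 + (2 * k - 4 * r) * ⟪T f, g⟫
            + (k - r * (1 + r)) * ‖g‖ ^ 2)
        = (k / (2 * r * (1 - r))
          * (2 * ‖f‖ ^ 2 + 4 * ‖T f‖ ^ 2 + 2 * 2 * ⟪T f, g⟫ + 2 * ‖g‖ ^ 2)
        - ((2 - r) / r * ‖f‖ ^ 2 + 2 / (r * (1 - r)) * ‖T f‖ ^ 2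
          + 2 * (2 / (1 - r)) * ⟪T f, g⟫ + (1 + r) / (1 - r) * ‖g‖ ^ 2))
          * (r * (1 - r)) := by
      field_simp
      ring
    rw [hfin] at key
    have hfin2 := (mul_nonneg_iff_of_pos_right hp).mp key
    linarith
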